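/- Let a, b, c be three roots in a reduced root system Φ, no two of which are opposite, such that a + b + c ∈ Φ ∪ {0} and (a + b) + c is a root when a + b is. If (a + b) + c is a root of Φ, then at least one of a + c and b + c is a root of Φ. (Equivalently: if x, y, z ∈ Φ are pairwise non-opposite and x + y + z ∈ Φ, then x + y ∈ Φ or y + z ∈ Φ or x + z ∈ Φ.) -/

import Mathlib

open scoped RealInnerProductSpace

/-- A reduced root system `Φ` with a fixed base (system of simple roots) `base`
in a real inner product space. -/
structure RootSystemData (V : Type) [NormedAddCommGroup V] [InnerProductSpace ℝ V] where
  Φ : Set V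
  base : Finset V
  finite : Φ.Finite
  zero_notMem : (0:V) ∉ Φ
  neg_mem : ∀ a ∈ Φ, -a ∈ Φ
  reduced : ∀ a ∈ Φ, ∀ t : ℝ, t • a ∈ Φ → t = 1 ∨ t = -1
  reflect_mem : ∀ a ∈ Φ, ∀ b ∈ Φ, b - (2 * (inner ℝ a b : ℝ) / (inner ℝ a a : ℝ)) • a ∈ Φ
  cartan_int : ∀ a ∈ Φ, ∀ b ∈ Φ, ∃ n : ℤ, 2 * (inner ℝ a b : ℝ) / (inner ℝ a a : ℝ) = (n : ℝ)
  base_sub : ↑base ⊆ Φ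
  base_indep : LinearIndependent ℝ (fun b : base => (b : V))
  base_gen : ∀ a ∈ Φ,
    (∃ c : V → ℕ, a = ∑ b ∈ base, c b • b) ∨ (∃ c : V → ℕ, -a = ∑ b ∈ base, c b • b)

namespace RootSystemData

variable {V : Type} [NormedAddCommGroup V] [InnerProductSpace ℝ V] (RS : RootSystemData V)

/-- `a` is a nonnegative integral combination of the simple roots. -/
def IsPos (a : V) : Prop := ∃ c : V → ℕ, a = ∑ b ∈ RS.base, c b • b

/-- The quotient space `V / ⟨Π ∖ J⟩`, ambient space of the relative roots. -/
abbrev Qspace (J : Finset V) : Type :=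
  V ⧸ Submodule.span ℝ ((RS.base : Set V) \ (J : Set V))

/-- The canonical projection `π : V → V / ⟨Π ∖ J⟩`. -/
def proj (J : Finset V) : V →ₗ[ℝ] RS.Qspace J :=
  Submodule.mkQ _

/-- The set of relative roots `Φ_J = π(Φ) ∖ {0}`. -/
def relRoots (J : Finset V) : Set (RS.Qspace J) := (RS.proj J '' RS.Φ) \ {0}

/-- `β` is a simple relative root: a nonzero image of a simple root in `J`. -/
def IsSimpleRel (J : Finset V) (β : RS.Qspace J) : Prop :=
  β ≠ 0 ∧ ∃ b ∈ J, β = RS.proj J b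

/-- `β` is a positive relative root: a relative root that is a nonnegative
integral combination of the simple relative roots. -/
def IsPosRel (J : Finset V) (β : RS.Qspace J) : Prop :=
  β ∈ RS.relRoots J ∧ ∃ c : V → ℕ, β = ∑ b ∈ J, c b • RS.proj J b

/-- `a` is maximal in `S` with respect to the base `Π`. -/
def IsMaximalIn (S : Set V) (a : V) : Prop := a ∈ S ∧ ∀ b ∈ RS.base, a + b ∉ S

/-- `a` is minimal in `S` with respect to the base `Π`. -/
def IsMinimalIn (S : Set V) (a : V) : Prop := a ∈ S ∧ ∀ b ∈ RS.base, a - b ∉ S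

/-- `a` is the highest root: every root is obtained from it by subtracting a
nonnegative combination of simple roots. -/
def IsHighest (a : V) : Prop :=
  a ∈ RS.Φ ∧ ∀ b ∈ RS.Φ, ∃ c : V → ℕ, a - b = ∑ x ∈ RS.base, c x • x

/-- `S` is an irreducible component of `Φ`: a nonempty subset orthogonal to its
complement admitting no further nontrivial orthogonal splitting. -/
def IsComponent (S : Set V) : Prop :=
  S ⊆ RS.Φ ∧ S.Nonempty ∧ (∀ a ∈ S, ∀ b ∈ RS.Φ \ S, (inner ℝ a b : ℝ) = 0) ∧
    ∀ T ⊆ S, T.Nonempty → (∀ a ∈ T, ∀ b ∈ RS.Φ \ T, (inner ℝ a b : ℝ) = 0) → T = S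

/-- The root system is irreducible. -/
def Irred : Prop := RS.IsComponent RS.Φ

end RootSystemData

/-
Put `s = x + y + z`. Since `⟪s, x⟫ + ⟪s, y⟫ + ⟪s, z⟫ = ⟪s, s⟫ > 0`, one of the three
summands, say `⟪s, x⟫`, is positive. Two distinct roots with positive inner product differ by a
root (one of the two Cartan integers is `1`, because their product is `< 4` by strict
Cauchy–Schwarz), so `s - x = y + z` is a root; `s ≠ x` since `y ≠ -z`.
-/

lemma Int.eq_one_or_eq_one_of_mul_lt_four {n m : ℤ} (hn : 0 < n) (hm : 0 < m) (h : n * m < 4) :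
    n = 1 ∨ m = 1 := by
  by_contra! hne
  nlinarith [show 2 ≤ n by omega, show 2 ≤ m by omega]

namespace RootSystemData

variable {V : Type} [NormedAddCommGroup V] [InnerProductSpace ℝ V] (RS : RootSystemData V)

lemma ne_zero_of_mem {a : V} (ha : a ∈ RS.Φ) : a ≠ 0 :=
  fun h => RS.zero_notMem (h ▸ ha)

lemma norm_smul_ne_norm_smul {a b : V} (ha : a ∈ RS.Φ) (hb : b ∈ RS.Φ) (hab : a ≠ b) :
    ‖b‖ • a ≠ ‖a‖ • b := by
  intro h
  have hna : 0 < ‖a‖ := norm_pos_iff.mpr (RS.ne_zero_of_mem ha)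
  have hba : b = (‖b‖ / ‖a‖) • a := by
    rw [div_eq_inv_mul, ← smul_smul, h, smul_smul, inv_mul_cancel₀ hna.ne', one_smul]
  have hpos : 0 < ‖b‖ / ‖a‖ := div_pos (norm_pos_iff.mpr (RS.ne_zero_of_mem hb)) hna
  rcases RS.reduced a ha _ (hba ▸ hb) with h1 | h1
  · exact hab (by rw [hba, h1, one_smul])
  · linarith

lemma inner_mul_inner_lt {a b : V} (ha : a ∈ RS.Φ) (hb : b ∈ RS.Φ) (hab : a ≠ b)
    (hpos : 0 < ⟪a, b⟫) : ⟪a, b⟫ * ⟪a, b⟫ < ⟪a, a⟫ * ⟪b, b⟫ := by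
  have hcs : ⟪a, b⟫ < ‖a‖ * ‖b‖ :=
    inner_lt_norm_mul_iff_real.mpr (RS.norm_smul_ne_norm_smul ha hb hab)
  calc ⟪a, b⟫ * ⟪a, b⟫ < (‖a‖ * ‖b‖) * (‖a‖ * ‖b‖) := mul_self_lt_mul_self hpos.le hcs
    _ = ⟪a, a⟫ * ⟪b, b⟫ := by rw [real_inner_self_eq_norm_sq, real_inner_self_eq_norm_sq]; ring

lemma sub_mem_of_cartan_eq_one {a b : V} (ha : a ∈ RS.Φ) (hb : b ∈ RS.Φ)
    (h : 2 * ⟪a, b⟫ / ⟪a, a⟫ = 1) : a - b ∈ RS.Φ := by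
  have hrefl := RS.neg_mem _ (RS.reflect_mem a ha b hb)
  rwa [h, one_smul, neg_sub] at hrefl

lemma sub_mem_of_inner_pos {a b : V} (ha : a ∈ RS.Φ) (hb : b ∈ RS.Φ) (hab : a ≠ b)
    (hpos : 0 < ⟪a, b⟫) : a - b ∈ RS.Φ := by
  have haa : 0 < ⟪a, a⟫ := real_inner_self_pos.mpr (RS.ne_zero_of_mem ha)
  have hbb : 0 < ⟪b, b⟫ := real_inner_self_pos.mpr (RS.ne_zero_of_mem hb)
  obtain ⟨n, hn⟩ := RS.cartan_int a ha b hb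
  obtain ⟨m, hm⟩ := RS.cartan_int b hb a ha
  rw [real_inner_comm] at hm
  have hn0 : (0 : ℝ) < n := hn ▸ div_pos (by linarith) haa
  have hm0 : (0 : ℝ) < m := hm ▸ div_pos (by linarith) hbb
  have hnm : (n : ℝ) * m < 4 := by
    rw [← hn, ← hm, div_mul_div_comm, div_lt_iff₀ (mul_pos haa hbb)]
    nlinarith [RS.inner_mul_inner_lt ha hb hab hpos]
  rcases Int.eq_one_or_eq_one_of_mul_lt_four (by exact_mod_cast hn0) (by exact_mod_cast hm0)
    (by exact_mod_cast hnm) with rfl | rfl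
  · exact RS.sub_mem_of_cartan_eq_one ha hb (by simpa using hn)
  · rw [← neg_sub]
    exact RS.neg_mem _ (RS.sub_mem_of_cartan_eq_one hb ha (by rw [real_inner_comm]; simpa using hm))

lemma add_mem_of_inner_add_add_pos {x y z : V} (hx : x ∈ RS.Φ) (hyz : y ≠ -z)
    (hsum : x + y + z ∈ RS.Φ) (hpos : 0 < ⟪x + y + z, x⟫) : y + z ∈ RS.Φ := by
  have hne : x + y + z ≠ x := by
    rw [add_assoc, ne_eq, add_eq_left]
    exact fun h => hyz (eq_neg_of_add_eq_zero_left h)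
  simpa [add_assoc] using RS.sub_mem_of_inner_pos hsum hx hne hpos

end RootSystemData

open RootSystemData in
theorem stmt11 {V : Type} [NormedAddCommGroup V] [InnerProductSpace ℝ V]
    (RS : RootSystemData V) (x y z : V)
    (hx : x ∈ RS.Φ) (hy : y ∈ RS.Φ) (hz : z ∈ RS.Φ)
    (hxy : x ≠ -y) (hyz : y ≠ -z) (hxz : x ≠ -z)
    (hsum : x + y + z ∈ RS.Φ) :
    x + y ∈ RS.Φ ∨ y + z ∈ RS.Φ ∨ x + z ∈ RS.Φ := by
  have hss : 0 < ⟪x + y + z, x + y + z⟫ := real_inner_self_pos.mpr (RS.ne_zero_of_mem hsum)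
  have hone : 0 < ⟪x + y + z, x⟫ ∨ 0 < ⟪x + y + z, y⟫ ∨ 0 < ⟪x + y + z, z⟫ := by
    by_contra! h
    rw [inner_add_right, inner_add_right] at hss
    linarith
  rcases hone with h | h | h
  · exact Or.inr (Or.inl (RS.add_mem_of_inner_add_add_pos hx hyz hsum h))
  · rw [show x + y + z = y + x + z by abel] at hsum h
    exact Or.inr (Or.inr (RS.add_mem_of_inner_add_add_pos hy hxz hsum h))
  · rw [show x + y + z = z + x + y by abel] at hsum h
    exact Or.inl (RS.add_mem_of_inner_add_add_pos hz hxy hsum h)
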